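/- Consider a finite list whose positions are each colored red, blue, or black, and any valid sequence of adjacent transpositions (one after which every red element occurs below every blue element). Then every black element j participates in at least min{B(j), R(j)} of the transpositions, where B(j) is the number of blue elements below j in the original list and R(j) is the number of red elements above j in the original list. -/

import Mathlib

/-- The three colors. -/
inductive Col : Type
  | red
  | blue
  | black
deriving DecidableEq

/-- `l'` is obtained from `l` by one adjacent transposition (swap). -/
def AdjSwap {γ : Type*} (l l' : List γ) : Prop :=
  ∃ (p s : List γ) (x y : γ), l = p ++ x :: y :: s ∧ l' = p ++ y :: x :: s

/-- `SwapSeqL k l l'` : `l'` is obtained from `l` by a sequence of `k`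
adjacent transpositions. -/
def SwapSeqL {γ : Type*} : ℕ → List γ → List γ → Prop
  | 0, l, l' => l' = l
  | k + 1, l, l' => ∃ l'', AdjSwap l l'' ∧ SwapSeqL k l'' l'

/-- We represent the original list `(a₁, …, a_d)` by `List.finRange d`
(element `x : Fin d` starts at position `x`), with colors `color : Fin d → Col`.
`Bcnt color x` is the number of blue elements below (after) `x` in the
original list. -/
def Bcnt {d : ℕ} (color : Fin d → Col) (x : Fin d) : ℕ :=
  (Finset.univ.filter (fun y => color y = Col.blue ∧ x < y)).card

/-- `Rcnt color x` is the number of red elements above (before) `x` in the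
original list. -/
def Rcnt {d : ℕ} (color : Fin d → Col) (x : Fin d) : ℕ :=
  (Finset.univ.filter (fun y => color y = Col.red ∧ y < x)).card

/-- Apply the adjacent transposition exchanging the entries at positions
`p` and `p + 1` of the list `l`. -/
def applySwap {γ : Type*} (p : ℕ) (l : List γ) : List γ :=
  l.take p ++ (match l.drop p with
    | x :: y :: s => y :: x :: s
    | s => s)

/-- Apply a sequence of adjacent transpositions, given by the list of the
positions at which they act, from left to right. -/
def applySwaps {γ : Type*} (sws : List ℕ) (l : List γ) : List γ :=
  sws.foldl (fun l p => applySwap p l) l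

/-- The number of transpositions of the sequence `sws` (applied to `l`)
in which the element `j` participates, i.e. in which `j` is one of the two
exchanged elements. -/
def participations {γ : Type*} [DecidableEq γ] (j : γ) : List ℕ → List γ → ℕ
  | [], _ => 0
  | p :: ps, l => (if j ∈ (l.drop p).take 2 then 1 else 0) + participations j ps (applySwap p l)

/-!
For an element `j`, consider the set of elements whose order relative to `j` is reversed by
the whole sequence of swaps. A swap in which `j` does not participate changes the relative
order of no pair involving `j`, and a swap in which it does changes it for only one partner, so
this set has at most as many elements as `j` has participations. If every blue element below
`j` ends up above it, the set already has `B(j)` elements. Otherwise some blue `b` stays below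
`j`; validity puts every red element below `b`, so every red element above `j` has been moved
below `j`, and the set has at least `R(j)` elements.
-/

open Finset

namespace List

variable {γ : Type*} [DecidableEq γ] {t s : List γ} {u v x y : γ}

theorem idxOf_append_cons_cons_swap_of_ne (hu : x ≠ u) (hv : x ≠ v) :
    (t ++ v :: u :: s).idxOf x = (t ++ u :: v :: s).idxOf x ∧
      ((t ++ u :: v :: s).idxOf x < t.length ∨ t.length + 2 ≤ (t ++ u :: v :: s).idxOf x) := by
  grind

theorem idxOf_append_cons_cons_swap (x : γ) :
    (t ++ v :: u :: s).idxOf x = (t ++ u :: v :: s).idxOf x ∨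
      (t.length ≤ (t ++ u :: v :: s).idxOf x ∧ (t ++ u :: v :: s).idxOf x ≤ t.length + 1 ∧
        t.length ≤ (t ++ v :: u :: s).idxOf x ∧ (t ++ v :: u :: s).idxOf x ≤ t.length + 1) := by
  grind

theorem idxOf_lt_idxOf_append_cons_cons_swap_iff (h : x ≠ u ∧ x ≠ v ∨ y ≠ u ∧ y ≠ v) :
    (t ++ v :: u :: s).idxOf x < (t ++ v :: u :: s).idxOf y ↔
      (t ++ u :: v :: s).idxOf x < (t ++ u :: v :: s).idxOf y := by
  rcases h with ⟨hu, hv⟩ | ⟨hu, hv⟩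
  · have hx := idxOf_append_cons_cons_swap_of_ne (t := t) (s := s) hu hv
    rcases idxOf_append_cons_cons_swap (t := t) (s := s) (u := u) (v := v) y with hy | hy <;> omega
  · have hy := idxOf_append_cons_cons_swap_of_ne (t := t) (s := s) hu hv
    rcases idxOf_append_cons_cons_swap (t := t) (s := s) (u := u) (v := v) x with hx | hx <;> omega

end List

section OrderFlipped

variable {γ : Type*} [DecidableEq γ]

def OrderFlipped (j : γ) (l l' : List γ) (x : γ) : Prop :=
  ¬(l.idxOf x < l.idxOf j ↔ l'.idxOf x < l'.idxOf j)

instance (j : γ) (l l' : List γ) : DecidablePred (OrderFlipped j l l') :=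
  fun _ => inferInstanceAs (Decidable (¬_))

theorem not_orderFlipped_self (j : γ) (l : List γ) (x : γ) : ¬OrderFlipped j l l x := by
  simp [OrderFlipped]

theorem OrderFlipped.or {j x : γ} {l l' l'' : List γ} (h : OrderFlipped j l l'' x) :
    OrderFlipped j l l' x ∨ OrderFlipped j l' l'' x := by
  unfold OrderFlipped at *
  tauto

theorem orderFlipped_append_cons_cons_swap {t s : List γ} {u v j x : γ}
    (h : OrderFlipped j (t ++ u :: v :: s) (t ++ v :: u :: s) x) :
    x = u ∧ j = v ∨ x = v ∧ j = u := by
  by_cases hxj : x = j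
  · subst hxj
    exact absurd h (by simp [OrderFlipped])
  by_cases hxj' : x ≠ u ∧ x ≠ v ∨ j ≠ u ∧ j ≠ v
  · exact absurd (List.idxOf_lt_idxOf_append_cons_cons_swap_iff hxj').symm h
  · grind

theorem card_filter_orderFlipped_append_cons_cons_swap_le (S : Finset γ) (t s : List γ)
    (u v j : γ) :
    #(S.filter (OrderFlipped j (t ++ u :: v :: s) (t ++ v :: u :: s))) ≤
      if j = u ∨ j = v then 1 else 0 := by
  have hsub : S.filter (OrderFlipped j (t ++ u :: v :: s) (t ++ v :: u :: s)) ⊆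
      if j = u then {v} else if j = v then {u} else ∅ := by
    intro x hx
    have := orderFlipped_append_cons_cons_swap (mem_filter.1 hx).2
    split_ifs <;> grind
  refine (card_le_card hsub).trans ?_
  split_ifs <;> simp_all

theorem card_filter_orderFlipped_applySwap_le (S : Finset γ) (j : γ) (p : ℕ) (l : List γ) :
    #(S.filter (OrderFlipped j l (applySwap p l))) ≤
      if j ∈ (l.drop p).take 2 then 1 else 0 := by
  rcases hdrop : l.drop p with _ | ⟨u, _ | ⟨v, s⟩⟩
  case cons.cons =>
    have hl : l = l.take p ++ u :: v :: s := by rw [← hdrop, List.take_append_drop]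
    have hswap : applySwap p l = l.take p ++ v :: u :: s := by simp only [applySwap, hdrop]
    have key := card_filter_orderFlipped_append_cons_cons_swap_le S (l.take p) s u v j
    rw [← hl, ← hswap] at key
    simpa using key
  all_goals
    have hswap : applySwap p l = l := by
      conv_rhs => rw [← List.take_append_drop p l]
      simp only [applySwap, hdrop]
    simp [hswap, not_orderFlipped_self]

theorem card_filter_orderFlipped_applySwaps_le (S : Finset γ) (j : γ) (sws : List ℕ)
    (l : List γ) : #(S.filter (OrderFlipped j l (applySwaps sws l))) ≤ participations j sws l := by
  induction sws generalizing l with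
  | nil =>
    rw [applySwaps, List.foldl_nil, filter_false_of_mem fun x _ => not_orderFlipped_self j l x,
      card_empty]
    exact Nat.zero_le _
  | cons p ps ih =>
    let l' := applySwap p l
    have hsub : S.filter (OrderFlipped j l (applySwaps (p :: ps) l)) ⊆
        S.filter (OrderFlipped j l l') ∪ S.filter (OrderFlipped j l' (applySwaps ps l')) := by
      rw [← filter_or]
      exact monotone_filter_right S fun _ _ h => h.or
    calc _ ≤ _ := card_le_card hsub
      _ ≤ _ := card_union_le _ _
      _ ≤ _ := add_le_add (card_filter_orderFlipped_applySwap_le S j p l) (ih l')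

end OrderFlipped

theorem black_participations_lower_bound_general (d : ℕ) (color : Fin d → Col) (sws : List ℕ)
    (hvalid : ∀ r b : Fin d, color r = Col.red → color b = Col.blue →
      (applySwaps sws (List.finRange d)).idxOf b <
        (applySwaps sws (List.finRange d)).idxOf r) :
    ∀ j : Fin d, color j = Col.black →
      min (Bcnt color j) (Rcnt color j) ≤ participations j sws (List.finRange d) := by
  intro j _
  have hflips := card_filter_orderFlipped_applySwaps_le univ j sws (List.finRange d)
  set L := applySwaps sws (List.finRange d)
  by_cases hblue : ∀ b, color b = Col.blue → j < b → OrderFlipped j (List.finRange d) L b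
  · refine (min_le_left _ _).trans (le_trans (card_le_card fun b hb => ?_) hflips)
    simp only [mem_filter, mem_univ, true_and] at hb ⊢
    exact hblue b hb.1 hb.2
  · push Not at hblue
    obtain ⟨b, hb, hjb, hb_stays⟩ := hblue
    refine (min_le_right _ _).trans (le_trans (card_le_card fun r hr => ?_) hflips)
    simp only [mem_filter, mem_univ, true_and] at hr ⊢
    have hbr := hvalid r b hr.1 hb
    simp only [OrderFlipped, List.idxOf_finRange, not_not] at hb_stays ⊢
    have := Fin.lt_def.1 hr.2
    have := Fin.lt_def.1 hjb
    omega

/-- In any valid sequence of adjacent transpositions (one after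
which every red element occurs below every blue element), every black element
`j` participates in at least `min (B j) (R j)` of the transpositions. -/
theorem black_participations_lower_bound (d : ℕ) (color : Fin d → Col) (sws : List ℕ)
    (hrange : ∀ p ∈ sws, p + 1 < d)
    (hvalid : ∀ r b : Fin d, color r = Col.red → color b = Col.blue →
      (applySwaps sws (List.finRange d)).idxOf b <
        (applySwaps sws (List.finRange d)).idxOf r) :
    ∀ j : Fin d, color j = Col.black →
      min (Bcnt color j) (Rcnt color j) ≤ participations j sws (List.finRange d) :=
  black_participations_lower_bound_general d color sws hvalid
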